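/- arXiv:math/9610219 — 2 statements merged into one kernel-verified Lean document; each statement's English description precedes it below -/
import Mathlib

section
/- Assume the continuum hypothesis fails, i.e., 2^ℵ₀ > ℵ₁. Then the σ-ideal I* does not have property (M): there is no Borel measurable function f : Tr → Tr such that f⁻¹[{T}] ∉ I* for every T ∈ Tr. -/
open Set MeasureTheory

/-- A subtree of `ω^{<ω}`: a set of finite sequences of naturals closed under
initial segments (prefixes). -/
def IsTree (T : Set (List ℕ)) : Prop := ∀ s ∈ T, ∀ t : List ℕ, t <+: s → t ∈ T

/-- `T` has an infinite branch. -/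
def HasInfiniteBranch (T : Set (List ℕ)) : Prop :=
  ∃ x : ℕ → ℕ, ∀ n : ℕ, (List.range n).map x ∈ T

/-- A well-founded tree: a subtree of `ω^{<ω}` with no infinite branch. -/
def IsWFTree (T : Set (List ℕ)) : Prop := IsTree T ∧ ¬ HasInfiniteBranch T

/-- The child relation of `T`: `childRel T s t` iff `s = t⌢⟨m⟩ ∈ T` for some `m`. -/
def childRel (T : Set (List ℕ)) (s t : List ℕ) : Prop := s ∈ T ∧ ∃ m : ℕ, s = t ++ [m]

/-- The canonical rank function of a well-founded tree:
`h_T ν = sup { h_T (ν⌢⟨m⟩) + 1 : ν⌢⟨m⟩ ∈ T }`. -/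
noncomputable def treeRank (T : Set (List ℕ)) (ν : List ℕ) : Ordinal :=
  @dite _ (WellFounded (childRel T)) (Classical.dec _) (fun h => (h.apply ν).rank) (fun _ => 0)

/-- `A_α`: the well-founded trees containing `⟨⟩` whose canonical rank at `⟨⟩` is `α`. -/
def Atree (α : Ordinal) : Set (Set (List ℕ)) :=
  {T | IsWFTree T ∧ [] ∈ T ∧ treeRank T [] = α}

/-- `n^{≤ n}`: the finite sequences of length at most `n` with all entries `< n`. -/
def seqBelow (n : ℕ) : Set (List ℕ) := {l | l.length ≤ n ∧ ∀ x ∈ l, x < n}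

/-- The basic τ_α-open set `U(n,T)` determined by `n ∈ ℕ` and `T ∈ A_α`. -/
def Unbhd (α : Ordinal) (n : ℕ) (T : ↥(Atree α)) : Set (↥(Atree α)) :=
  {T' | T'.1 ∩ seqBelow n = T.1 ∩ seqBelow n ∧
    ∀ ν ∈ T.1 ∩ seqBelow n, treeRank T'.1 ν = treeRank T.1 ν}

/-- The topology `τ_α` on `A_α`, generated by the sets `U(n,T)`. -/
def tauTop (α : Ordinal) : TopologicalSpace ↥(Atree α) :=
  TopologicalSpace.generateFrom {s | ∃ (n : ℕ) (T : ↥(Atree α)), s = Unbhd α n T}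

/-- The standard (product) topology on `2^{ω^{<ω}}`, i.e. on `Set (List ℕ)`:
generated by the subbasic clopen cylinders `{T | l ∈ T}` and `{T | l ∉ T}`. -/
def cylTop : TopologicalSpace (Set (List ℕ)) :=
  TopologicalSpace.generateFrom
    ({s | ∃ l : List ℕ, s = {T : Set (List ℕ) | l ∈ T}} ∪
     {s | ∃ l : List ℕ, s = {T : Set (List ℕ) | l ∉ T}})

/-- The Polish space `Tr` of all subtrees of `ω^{<ω}`. -/
def Tr : Type := {T : Set (List ℕ) // IsTree T}

/-- The standard topology of `Tr`: the subspace topology from `2^{ω^{<ω}}`. -/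
def trTop : TopologicalSpace Tr := TopologicalSpace.induced Subtype.val cylTop

/-- The copy in `A_α` of a set `B ⊆ Tr`, i.e. the set `B ∩ A_α` viewed as a subset of
the space `⟨A_α, τ_α⟩`. -/
def restrictA (α : Ordinal) (B : Set Tr) : Set ↥(Atree α) :=
  {T | (⟨T.1, T.2.1.1⟩ : Tr) ∈ B}

/-- The σ-ideal `I*` on `Tr`: `E ∈ I*` iff there is a Borel set `B ⊇ E` (in the
standard topology of `Tr`) such that `B ∩ A_α` is τ_α-meager for every countable
ordinal `α > 0`. -/
def memIstar (E : Set Tr) : Prop :=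
  ∃ B : Set Tr, E ⊆ B ∧ MeasurableSet[@borel Tr trTop] B ∧
    ∀ α : Ordinal, 0 < α → α.card ≤ Cardinal.aleph0 →
      @IsMeagre ↥(Atree α) (tauTop α) (restrictA α B)

/-!
A Borel set that is non-meagre in `(A_α, τ_α)` is comeagre in some non-meagre basic open set
`U(n,T)`, and for countable `α` there are only countably many of these, since `U(n,T)` is
determined by `n`, `T ∩ n^{≤n}` and finitely many ranks `≤ α`. Two disjoint sets cannot both be
comeagre in the same non-meagre set, so if every fibre of `f` were `I*`-positive, the fibres
would be indexed injectively by pairs `(α, U(n,T))` with `α < ω₁`, of which there are only `ℵ₁`;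
but `Tr` has `2^ℵ₀` elements.
-/

open Function TopologicalSpace Cardinal Topology

section TauTopology

attribute [local instance] tauTop

variable {α : Ordinal}

def unbhdBasis (α : Ordinal) : Set (Set ↥(Atree α)) :=
  {s | ∃ (n : ℕ) (T : ↥(Atree α)), s = Unbhd α n T}

lemma mem_Unbhd_self (n : ℕ) (T : ↥(Atree α)) : T ∈ Unbhd α n T :=
  ⟨rfl, fun _ _ => rfl⟩

lemma Unbhd_subset_of_mem {n : ℕ} {T T' : ↥(Atree α)} (h : T' ∈ Unbhd α n T) :
    Unbhd α n T' ⊆ Unbhd α n T := by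
  rintro S ⟨hS, hrank⟩
  refine ⟨hS.trans h.1, fun ν hν => ?_⟩
  have hν' : ν ∈ T'.1 ∩ seqBelow n := h.1 ▸ hν
  exact (hrank ν hν').trans (h.2 ν hν)

lemma seqBelow_mono {n m : ℕ} (h : n ≤ m) : seqBelow n ⊆ seqBelow m :=
  fun _ hl => ⟨hl.1.trans h, fun x hx => (hl.2 x hx).trans_le h⟩

lemma Unbhd_anti {n m : ℕ} (h : n ≤ m) (T : ↥(Atree α)) :
    Unbhd α m T ⊆ Unbhd α n T := by
  rintro S ⟨hS, hrank⟩
  have hnm : seqBelow m ∩ seqBelow n = seqBelow n :=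
    inter_eq_self_of_subset_right (seqBelow_mono h)
  refine ⟨?_, fun ν hν => hrank ν ⟨hν.1, seqBelow_mono h hν.2⟩⟩
  rw [← hnm, ← inter_assoc, ← inter_assoc, hS]

lemma exists_Unbhd_subset {s : Set ↥(Atree α)} (hs : IsOpen s) :
    ∀ T ∈ s, ∃ n, Unbhd α n T ⊆ s := by
  induction hs with
  | basic u hu =>
    obtain ⟨n, T, rfl⟩ := hu
    exact fun T' hT' => ⟨n, Unbhd_subset_of_mem hT'⟩
  | univ => exact fun _ _ => ⟨0, subset_univ _⟩
  | inter u v _ _ ihu ihv =>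
    rintro T ⟨hTu, hTv⟩
    obtain ⟨n, hn⟩ := ihu T hTu
    obtain ⟨m, hm⟩ := ihv T hTv
    exact ⟨max n m, subset_inter ((Unbhd_anti (le_max_left _ _) T).trans hn)
      ((Unbhd_anti (le_max_right _ _) T).trans hm)⟩
  | sUnion S _ ih =>
    rintro T ⟨t, htS, hTt⟩
    obtain ⟨n, hn⟩ := ih t htS T hTt
    exact ⟨n, hn.trans (subset_sUnion_of_mem htS)⟩

lemma isTopologicalBasis_unbhdBasis : IsTopologicalBasis (unbhdBasis α) :=
  isTopologicalBasis_of_isOpen_of_nhds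
    (fun _ hu => GenerateOpen.basic _ hu)
    (fun T _ hT hs =>
      let ⟨n, hn⟩ := exists_Unbhd_subset hs T hT
      ⟨_, ⟨n, T, rfl⟩, mem_Unbhd_self n T, hn⟩)

lemma treeRank_le_of_mem_Atree {T : Set (List ℕ)} (hT : T ∈ Atree α) :
    ∀ ν ∈ T, treeRank T ν ≤ α := by
  intro ν
  induction ν using List.reverseRecOn with
  | nil => exact fun _ => hT.2.2.le
  | append_singleton ν m ih =>
    intro hνm
    refine le_trans ?_ (ih (hT.1.1 _ hνm _ ⟨[m], rfl⟩))
    unfold treeRank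
    split_ifs with h
    · exact ((h.apply ν).rank_lt_of_rel ⟨hνm, m, rfl⟩).le
    · exact le_rfl

lemma seqBelow_finite (n : ℕ) : (seqBelow n).Finite := by
  refine ((List.finite_length_le (Fin n) n).image (List.map Fin.val)).subset ?_
  rintro l ⟨hlen, hl⟩
  lift l to List (Fin n) using hl
  exact ⟨l, by simpa using hlen, rfl⟩

lemma countable_Iic_of_card_le_aleph0 (hα : α.card ≤ ℵ₀) : (Iic α).Countable := by
  rw [← Iio_insert]
  refine Countable.insert _ ?_
  rw [← le_aleph0_iff_set_countable, mk_Iio_ordinal, lift_le_aleph0]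
  exact hα

/-- `U(n,T)` depends only on which `ν ∈ n^{≤n}` lie in `T` and on their ranks; capping the
ranks at `α` lets these codes range over a countable set. -/
noncomputable def unbhdCode (α : Ordinal) (n : ℕ) (T : ↥(Atree α)) :
    seqBelow n → Prop × Iic α :=
  fun ν => (ν.1 ∈ T.1, ⟨min (treeRank T.1 ν) α, mem_Iic.2 (min_le_right _ _)⟩)

lemma mem_Unbhd_of_unbhdCode_eq {n : ℕ} {T S : ↥(Atree α)}
    (h : unbhdCode α n T = unbhdCode α n S) : S ∈ Unbhd α n T := by
  have hmem (ν : seqBelow n) : ν.1 ∈ T.1 ↔ ν.1 ∈ S.1 :=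
    Iff.of_eq (congrArg Prod.fst (congrFun h ν))
  have hrank (ν : seqBelow n) : min (treeRank T.1 ν) α = min (treeRank S.1 ν) α :=
    congrArg Subtype.val (congrArg Prod.snd (congrFun h ν))
  refine ⟨?_, fun ν ⟨hνT, hν⟩ => ?_⟩
  · ext ν
    exact and_congr_left fun hν => (hmem ⟨ν, hν⟩).symm
  · have hνS := (hmem ⟨ν, hν⟩).1 hνT
    simpa [min_eq_left (treeRank_le_of_mem_Atree S.2 ν hνS),
      min_eq_left (treeRank_le_of_mem_Atree T.2 ν hνT)] using (hrank ⟨ν, hν⟩).symm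

lemma countable_unbhdBasis (hα : α.card ≤ ℵ₀) : (unbhdBasis α).Countable := by
  have : Countable (Iic α) := (countable_Iic_of_card_le_aleph0 hα).to_subtype
  have (n : ℕ) : Finite (seqBelow n) := (seqBelow_finite n).to_subtype
  have hfactor (n : ℕ) : FactorsThrough (Unbhd α n) (unbhdCode α n) :=
    fun T S h => (Unbhd_subset_of_mem (mem_Unbhd_of_unbhdCode_eq h.symm)).antisymm
      (Unbhd_subset_of_mem (mem_Unbhd_of_unbhdCode_eq h))
  have hunion : unbhdBasis α = ⋃ n, range (Unbhd α n) := by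
    ext s; simp [unbhdBasis, eq_comm]
  rw [hunion]
  refine countable_iUnion fun n => (countable_range
    (extend (unbhdCode α n) (Unbhd α n) fun _ => ∅)).mono ?_
  rintro _ ⟨T, rfl⟩
  exact ⟨_, (hfactor n).extend_apply _ T⟩

end TauTopology

section Meagre

variable {X : Type*} [TopologicalSpace X]

lemma isMeagre_of_isMeagre_diff_of_disjoint {b s s' : Set X} (h : IsMeagre (b \ s))
    (h' : IsMeagre (b \ s')) (hss' : Disjoint s s') : IsMeagre b := by
  simpa [← sdiff_inter, hss'.inter_eq] using h.union h'

lemma BaireMeasurableSet.exists_mem_basis_isMeagre_diff {B : Set (Set X)}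
    (hB : IsTopologicalBasis B) (hBc : B.Countable) {s : Set X} (hs : BaireMeasurableSet s)
    (hns : ¬IsMeagre s) : ∃ b ∈ B, ¬IsMeagre b ∧ IsMeagre (b \ s) := by
  obtain ⟨u, hu, hsu⟩ := hs.residualEq_isOpen
  have hus : IsMeagre (u \ s) := Filter.eventuallyEq_empty.1 <| by
    simpa using hsu.symm.diff (Filter.EventuallyEq.refl _ s)
  have hsu' : IsMeagre (s \ u) := Filter.eventuallyEq_empty.1 <| by
    simpa using hsu.diff (Filter.EventuallyEq.refl _ u)
  by_contra! h
  refine hns ((IsMeagre.union ?_ hsu').mono fun x hx =>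
    (em (x ∈ u)).imp_right fun hxu => ⟨hx, hxu⟩)
  rw [hB.open_eq_sUnion' hu, sUnion_eq_biUnion]
  refine isMeagre_biUnion (hBc.mono fun b hb => hb.1) fun b hb => ?_
  by_contra hb'
  exact h b hb.1 hb' (hus.mono (sdiff_subset_sdiff_left hb.2))

lemma countable_setOf_exists_isMeagre_diff {Y : Type*} {B : Set (Set X)} (hB : B.Countable)
    {g : Y → Set X} (hg : Pairwise (Disjoint on g)) :
    {y | ∃ b ∈ B, ¬IsMeagre b ∧ IsMeagre (b \ g y)}.Countable := by
  refine (hB.biUnion fun b _ =>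
    Subsingleton.countable (s := {y | ¬IsMeagre b ∧ IsMeagre (b \ g y)}) ?_).mono
      fun y ⟨b, hb, hy⟩ => mem_biUnion hb hy
  rintro y ⟨hb, hy⟩ y' ⟨-, hy'⟩
  by_contra hne
  exact hb (isMeagre_of_isMeagre_diff_of_disjoint hy hy' (hg hne))

end Meagre

section TrTopology

attribute [local instance] trTop tauTop

lemma isOpen_setOf_mem (l : List ℕ) : IsOpen {T : Tr | l ∈ T.1} :=
  isOpen_induced (t := cylTop) (GenerateOpen.basic _ (Or.inl ⟨l, rfl⟩))

lemma isOpen_setOf_notMem (l : List ℕ) : IsOpen {T : Tr | l ∉ T.1} :=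
  isOpen_induced (t := cylTop) (GenerateOpen.basic _ (Or.inr ⟨l, rfl⟩))

lemma t1Space_Tr : T1Space Tr := by
  refine t1Space_iff_exists_open.2 fun T S hTS => ?_
  obtain ⟨l, hl⟩ : ∃ l, ¬(l ∈ T.1 ↔ l ∈ S.1) := by
    by_contra! h
    exact hTS (Subtype.ext (Set.ext h))
  by_cases hlT : l ∈ T.1
  · exact ⟨_, isOpen_setOf_mem l, hlT, fun hlS => hl (iff_of_true hlT hlS)⟩
  · exact ⟨_, isOpen_setOf_notMem l, hlT, fun hlS => hl (iff_of_false hlT hlS)⟩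

lemma measurableSet_singleton_Tr (T : Tr) : MeasurableSet[borel Tr] {T} :=
  have := t1Space_Tr
  (MeasurableSpace.measurableSet_generateFrom isOpen_compl_singleton).of_compl

lemma exists_mem_seqBelow (l : List ℕ) : ∃ n, l ∈ seqBelow n :=
  ⟨l.length + l.sum + 1, by omega, fun x hx => by have := List.le_sum_of_mem hx; omega⟩

variable {α : Ordinal}

lemma eventually_mem_iff_mem (l : List ℕ) (T : ↥(Atree α)) :
    ∀ᶠ S in 𝓝 T, (l ∈ S.1 ↔ l ∈ T.1) := by
  obtain ⟨n, hl⟩ := exists_mem_seqBelow l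
  refine isTopologicalBasis_unbhdBasis.mem_nhds_iff.2
    ⟨_, ⟨n, T, rfl⟩, mem_Unbhd_self n T, fun S hS => ?_⟩
  simpa [hl] using Set.ext_iff.1 hS.1 l

def Atree.toTr (T : ↥(Atree α)) : Tr := ⟨T.1, T.2.1.1⟩

lemma continuous_Atree_toTr : Continuous (Atree.toTr (α := α)) := by
  refine continuous_induced_rng.2 (continuous_generateFrom_iff.2 ?_)
  rintro _ (⟨l, rfl⟩ | ⟨l, rfl⟩) <;> refine isOpen_iff_mem_nhds.2 fun T hT => ?_
  · exact (eventually_mem_iff_mem l T).mono fun S hS => hS.2 hT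
  · exact (eventually_mem_iff_mem l T).mono fun S hS => mt hS.1 hT

lemma measurableSet_restrictA {B : Set Tr} (hB : MeasurableSet[borel Tr] B) :
    MeasurableSet[borel ↥(Atree α)] (restrictA α B) :=
  continuous_Atree_toTr.borel_measurable hB

lemma exists_isMeagre_diff_restrictA_of_not_memIstar {E : Set Tr}
    (hE : MeasurableSet[borel Tr] E) (h : ¬memIstar E) :
    ∃ α : Ordinal, α.card ≤ ℵ₀ ∧
      ∃ b ∈ unbhdBasis α, ¬IsMeagre b ∧ IsMeagre (b \ restrictA α E) := by
  obtain ⟨α, hα, hnm⟩ : ∃ α : Ordinal, α.card ≤ ℵ₀ ∧ ¬IsMeagre (restrictA α E) := by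
    by_contra! h'
    exact h ⟨E, subset_rfl, hE, fun α _ hα => h' α hα⟩
  let := borel ↥(Atree α)
  have : BorelSpace ↥(Atree α) := ⟨rfl⟩
  exact ⟨α, hα, (measurableSet_restrictA hE).baireMeasurableSet.exists_mem_basis_isMeagre_diff
    isTopologicalBasis_unbhdBasis (countable_unbhdBasis hα) hnm⟩

def comeagreFibers (f : Tr → Tr) (α : Ordinal) : Set Tr :=
  {T | ∃ b ∈ unbhdBasis α, ¬IsMeagre b ∧ IsMeagre (b \ restrictA α (f ⁻¹' {T}))}

lemma countable_comeagreFibers (f : Tr → Tr) {α : Ordinal} (hα : α.card ≤ ℵ₀) :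
    (comeagreFibers f α).Countable :=
  countable_setOf_exists_isMeagre_diff (countable_unbhdBasis hα)
    fun _ _ hTS => ((disjoint_singleton.2 hTS).preimage f).preimage Atree.toTr

end TrTopology

universe u

lemma mk_le_aleph_one_of_countable_cover {X : Type u} (s : Ordinal.{u} → Set X)
    (hs : ∀ α, α.card ≤ ℵ₀ → (s α).Countable) (hX : ∀ x, ∃ α, α.card ≤ ℵ₀ ∧ x ∈ s α) :
    #X ≤ ℵ₁ := by
  let ι := Iio (ℵ₁ : Cardinal.{u}).ord
  have hmem (α : ι) : α.1.card ≤ ℵ₀ := lt_aleph_one_iff.1 (lt_ord.1 α.2)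
  have hcover : (univ : Set X) ⊆ ⋃ α : ι, s α := fun x _ =>
    let ⟨α, hα, hx⟩ := hX x
    mem_iUnion.2 ⟨⟨α, lt_ord.2 (lt_aleph_one_iff.2 hα)⟩, hx⟩
  rw [← lift_le.{u + 1}, ← mk_univ]
  calc lift.{u + 1} #(univ : Set X)
      ≤ lift.{u + 1} #(⋃ α : ι, s α) := lift_le.2 (mk_le_mk_of_subset hcover)
    _ ≤ lift.{u} #ι * ⨆ α : ι, lift.{u + 1} #(s α) := mk_iUnion_le_lift _
    _ ≤ lift.{u + 1} ℵ₁ * ℵ₀ := by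
      gcongr
      · simp [ι, mk_Iio_ordinal]
      · exact ciSup_le' fun α => lift_le_aleph0.2 (le_aleph0_iff_set_countable.2 (hs α (hmem α)))
    _ = lift.{u + 1} ℵ₁ := mul_aleph0_eq (by simp)

lemma two_pow_aleph0_le_mk_Tr : 2 ^ ℵ₀ ≤ #Tr := by
  let treeOf (S : Set ℕ) : Tr := ⟨{l | ∀ x ∈ l, x ∈ S}, fun _ hs _ ht x hx => hs x (ht.subset hx)⟩
  have hinj : Injective treeOf := fun S S' h => Set.ext fun n => by
    simpa [treeOf] using Set.ext_iff.1 (congrArg Subtype.val h) [n]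
  simpa using mk_le_of_injective hinj

/-- If the continuum hypothesis fails, then `I*` does not have property (M): there is
no Borel function `f : Tr → Tr` all of whose fibers are `I*`-positive. -/
theorem stmt12 (hCH : Cardinal.aleph 1 < 2 ^ Cardinal.aleph0) :
    ¬ ∃ f : Tr → Tr, @Measurable Tr Tr (@borel Tr trTop) (@borel Tr trTop) f ∧
      ∀ T : Tr, ¬ memIstar (f ⁻¹' {T}) := by
  rintro ⟨f, hf, hpos⟩
  have hle : #Tr ≤ ℵ₁ := mk_le_aleph_one_of_countable_cover (comeagreFibers f)
    (fun _ hα => countable_comeagreFibers f hα) fun T =>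
      exists_isMeagre_diff_restrictA_of_not_memIstar (hf (measurableSet_singleton_Tr T)) (hpos T)
  exact hCH.not_ge (by simpa using lift_le.2 (two_pow_aleph0_le_mk_Tr.trans hle))
end

section
/- Suppose that I is a σ-ideal, that f : X → X is a Borel measurable function with f⁻¹[{x}] ∉ I for all x ∈ X, and that each set H_n(f), n ∈ ℕ, is either countable or contains a nonempty perfect subset of X. Then property (M'_x) holds for some x ∈ X. -/
open Set MeasureTheory

/-- `I` has property (M) relative to `E ⊆ X`: there is a Borel measurable function
`f : E → X` all of whose fibers (as subsets of `X`) are outside `I`. -/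
def MRel {X : Type*} [TopologicalSpace X] [MeasurableSpace X]
    (I : Set (Set X)) (E : Set X) : Prop :=
  ∃ f : ↥E → X, Measurable f ∧ ∀ x : X, (Subtype.val '' (f ⁻¹' {x})) ∉ I

/-- `I` has property (M'_x): it has property (M) relative to every open
neighborhood of `x`. -/
def MPrimeAt {X : Type*} [TopologicalSpace X] [MeasurableSpace X]
    (I : Set (Set X)) (x : X) : Prop :=
  ∀ U : Set X, IsOpen U → x ∈ U → MRel I U

/-- `H_n(f) = {y ∈ X : U n ∩ f⁻¹[{y}] ∉ I}`. -/
def Hset {X : Type*} (I : Set (Set X)) (U : ℕ → Set X) (f : X → X) (n : ℕ) : Set X :=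
  {y | U n ∩ f ⁻¹' {y} ∉ I}

/-
If (M'_x) failed everywhere, every point would lie in a basic set `U n` on which (M) fails.
For such `n` the set `H_n(f)` cannot contain a perfect set `P`: composing `f` with a Borel
map sending `P` onto `X` (via a Borel isomorphism `P ≃ X`) would witness (M) on `U n`.
So these `H_n(f)` are countable, and for a point `y` outside all of them the fibre
`f⁻¹[{y}]` is covered by countably many sets `U n ∩ f⁻¹[{y}] ∈ I`, hence lies in `I`.
-/

theorem Set.Countable.biUnion_mem_of_iUnion_mem {α ι : Type*} {I : Set (Set α)}
    (hcnt : ∀ g : ℕ → Set α, (∀ n, g n ∈ I) → (⋃ n, g n) ∈ I)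
    {s : Set ι} (hs : s.Countable) (hne : s.Nonempty) {g : ι → Set α}
    (hg : ∀ i ∈ s, g i ∈ I) : (⋃ i ∈ s, g i) ∈ I := by
  obtain ⟨e, rfl⟩ := hs.exists_eq_range hne
  rw [biUnion_range]
  exact hcnt _ fun n => hg _ (mem_range_self n)

theorem MeasurableSet.exists_measurable_extend {α β : Type*} [MeasurableSpace α]
    [MeasurableSpace β] [Nonempty β] {s : Set α} (hs : MeasurableSet s) {g : s → β}
    (hg : Measurable g) : ∃ G : α → β, Measurable G ∧ ∀ a : s, G a = g a := by
  inhabit β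
  exact ⟨Function.extend Subtype.val g fun _ => default,
    (MeasurableEmbedding.subtype_coe hs).measurable_extend hg measurable_const,
    Subtype.val_injective.extend_apply g _⟩

theorem Perfect.not_countable {α : Type*} [TopologicalSpace α] [PolishSpace α] {C : Set α}
    (hC : Perfect C) (hne : C.Nonempty) : ¬ C.Countable := by
  let := TopologicalSpace.upgradeIsCompletelyMetrizable α
  obtain ⟨j, hjC, -, hj⟩ := hC.exists_nat_bool_injection hne
  have : Uncountable (ℕ → Bool) := by
    rw [← Cardinal.aleph0_lt_mk_iff]
    simpa using Cardinal.aleph0_lt_continuum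
  intro hCc
  exact not_countable_univ (by simpa using (hCc.mono hjC).preimage hj)

theorem Perfect.exists_measurable_surjOn {X Y : Type*} [TopologicalSpace X] [PolishSpace X]
    [MeasurableSpace X] [BorelSpace X] [MeasurableSpace Y] [StandardBorelSpace Y]
    [Uncountable Y] {P : Set X} (hP : Perfect P) (hne : P.Nonempty) :
    ∃ G : X → Y, Measurable G ∧ SurjOn G P univ := by
  have : PolishSpace P := hP.closed.polishSpace
  let φ : P ≃ᵐ Y := PolishSpace.measurableEquivOfNotCountable
    (fun h => hP.not_countable hne (countable_coe_iff.1 h)) _root_.not_countable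
  obtain ⟨G, hG, hGφ⟩ := hP.closed.measurableSet.exists_measurable_extend φ.measurable
  refine ⟨G, hG, fun y _ => ⟨φ.symm y, (φ.symm y).2, ?_⟩⟩
  rw [hGφ, φ.apply_symm_apply]

section MRel

variable {X : Type*} [TopologicalSpace X] [MeasurableSpace X] {I : Set (Set X)}

theorem MRel.mono [Nonempty X] (hsub : ∀ A B : Set X, A ⊆ B → B ∈ I → A ∈ I)
    {A B : Set X} (hAB : A ⊆ B) (hA : MeasurableSet A) (h : MRel I A) : MRel I B := by
  obtain ⟨g, hg, hgI⟩ := h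
  obtain ⟨G, hG, hGg⟩ := hA.exists_measurable_extend hg
  refine ⟨fun z => G z, hG.comp measurable_subtype_coe, fun x hx => hgI x (hsub _ _ ?_ hx)⟩
  rintro - ⟨a, hax, rfl⟩
  exact ⟨⟨a, hAB a.2⟩, (hGg a).trans hax, rfl⟩

theorem mrel_of_surjOn {Z : Type*} [MeasurableSpace Z]
    (hsub : ∀ A B : Set X, A ⊆ B → B ∈ I → A ∈ I) {E : Set X} {f : X → Z}
    (hf : Measurable f) {G : Z → X} (hG : Measurable G) {P : Set Z}
    (hGP : SurjOn G P univ) (hP : ∀ z ∈ P, E ∩ f ⁻¹' {z} ∉ I) : MRel I E := by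
  refine ⟨fun z => G (f z), hG.comp (hf.comp measurable_subtype_coe), fun x hx => ?_⟩
  obtain ⟨p, hpP, rfl⟩ := hGP (mem_univ x)
  refine hP p hpP (hsub _ _ ?_ hx)
  rintro z ⟨hzE, hzp⟩
  exact ⟨⟨z, hzE⟩, congrArg G hzp, rfl⟩

end MRel

theorem stmt19_general {X : Type*} [TopologicalSpace X] [PolishSpace X]
    [MeasurableSpace X] [BorelSpace X] [Uncountable X]
    (I : Set (Set X))
    (hsub : ∀ A B : Set X, A ⊆ B → B ∈ I → A ∈ I)
    (hcnt : ∀ g : ℕ → Set X, (∀ n, g n ∈ I) → (⋃ n, g n) ∈ I)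
    (U : ℕ → Set X) (hbasis : TopologicalSpace.IsTopologicalBasis (Set.range U))
    (f : X → X) (hf : Measurable f) (hfib : ∀ x : X, f ⁻¹' {x} ∉ I)
    (hH : ∀ n : ℕ, (Hset I U f n).Countable ∨
      ∃ P : Set X, P ⊆ Hset I U f n ∧ Perfect P ∧ P.Nonempty) :
    ∃ x : X, MPrimeAt I x := by
  by_contra! hfail
  set N := {n | ¬ MRel I (U n)}
  have hcover : ∀ x, ∃ n ∈ N, x ∈ U n := by
    intro x
    obtain ⟨V, hV, hxV, hMV⟩ : ∃ V, IsOpen V ∧ x ∈ V ∧ ¬ MRel I V := by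
      simpa [MPrimeAt] using hfail x
    obtain ⟨-, ⟨n, rfl⟩, hxn, hnV⟩ := hbasis.exists_subset_of_mem_open hxV hV
    exact ⟨n, fun hM => hMV (hM.mono hsub hnV (hbasis.isOpen ⟨n, rfl⟩).measurableSet), hxn⟩
  have hNH : ∀ n ∈ N, (Hset I U f n).Countable := fun n hn =>
    (hH n).resolve_right fun ⟨P, hPH, hP, hPne⟩ =>
      let ⟨_, hG, hGP⟩ := hP.exists_measurable_surjOn hPne
      hn (mrel_of_surjOn hsub hf hG hGP hPH)
  obtain ⟨y, hy⟩ : (⋃ n ∈ N, Hset I U f n)ᶜ.Nonempty :=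
    nonempty_compl.2 fun h => not_countable_univ (h ▸ (to_countable N).biUnion hNH)
  have hyI : ∀ n ∈ N, U n ∩ f ⁻¹' {y} ∈ I := fun n hn => by
    simpa [Hset] using fun h => hy (mem_biUnion hn h)
  have hNne : N.Nonempty := let ⟨n, hn, _⟩ := hcover y; ⟨n, hn⟩
  refine hfib y (hsub _ _ ?_ ((to_countable N).biUnion_mem_of_iUnion_mem hcnt hNne hyI))
  intro z hz
  obtain ⟨n, hn, hzn⟩ := hcover z
  exact mem_biUnion hn ⟨hzn, hz⟩

/-- Let `X` be an uncountable Polish space, `I` a σ-ideal on `X` containing no nonempty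
open set, and `{U n}` a countable base of nonempty open sets.  If `f : X → X` is a
Borel function with all fibers outside `I`, and each `H_n(f)` is either countable or
contains a nonempty perfect set, then property (M'_x) holds for some `x ∈ X`. -/
theorem stmt19 {X : Type*} [TopologicalSpace X] [PolishSpace X]
    [MeasurableSpace X] [BorelSpace X] [Uncountable X]
    (I : Set (Set X))
    (hsub : ∀ A B : Set X, A ⊆ B → B ∈ I → A ∈ I)
    (hcnt : ∀ g : ℕ → Set X, (∀ n, g n ∈ I) → (⋃ n, g n) ∈ I)
    (hopen : ∀ V : Set X, IsOpen V → V.Nonempty → V ∉ I)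
    (U : ℕ → Set X) (hbasis : TopologicalSpace.IsTopologicalBasis (Set.range U))
    (hUne : ∀ n, (U n).Nonempty)
    (f : X → X) (hf : Measurable f) (hfib : ∀ x : X, f ⁻¹' {x} ∉ I)
    (hH : ∀ n : ℕ, (Hset I U f n).Countable ∨
      ∃ P : Set X, P ⊆ Hset I U f n ∧ Perfect P ∧ P.Nonempty) :
    ∃ x : X, MPrimeAt I x :=
  stmt19_general I hsub hcnt U hbasis f hf hfib hH
end
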